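/- Let A_1, …, A_m be real n×n matrices and suppose there exist nonnegative reals α_1, …, α_m with Σ_i α_i = 1 such that the convex combination Ā = Σ_i α_i A_i is Hurwitz. Then there exists a real symmetric positive definite matrix P such that, defining Ω_i = {x ∈ ℝⁿ : xᵀ(A_iᵀ P + P A_i) x < 0}, one has ℝⁿ \ {0} = ∪_{i=1}^m Ω_i. -/

import Mathlib

/-!
For `x ≠ 0` the numbers `xᵀ(A_iᵀP + PA_i)x` have the nonnegative combination
`xᵀ(ĀᵀP + PĀ)x`, so they cannot all be nonnegative once `ĀᵀP + PĀ = -1`. It remains to prove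
Lyapunov's theorem: a Hurwitz `M` admits a positive definite `P` with `MᵀP + PM = -1`.

Since no sum `λ + μ` of eigenvalues of `M` vanishes, `P ↦ MᵀP + PM` is invertible (Sylvester),
and the solution is symmetric by uniqueness. Deform `M` to `-1` through the Hurwitz matrices
`t • M - (1 - t) • 1`; the solution `P t` moves continuously and starts at `P 0 = 2⁻¹ • 1`.
A positive semidefinite solution is already definite, so the set of `t` with `P t` positive
definite is closed as well as open, hence all of `[0, 1]`.
-/

open Matrix

/-- A real square matrix is Hurwitz if every eigenvalue (over ℂ) has
strictly negative real part. -/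
def IsHurwitz {n : ℕ} (M : Matrix (Fin n) (Fin n) ℝ) : Prop :=
  ∀ μ ∈ spectrum ℂ (M.map (algebraMap ℝ ℂ)), μ.re < 0

open Polynomial Topology

namespace Matrix

section Sylvester

variable {K : Type*} [Field K] {ι κ : Type*} [Fintype ι] [DecidableEq ι] [Fintype κ]
  [DecidableEq κ]

theorem spectrum_transpose (A : Matrix ι ι K) : spectrum K Aᵀ = spectrum K A := by
  ext r
  rw [mem_spectrum_iff_isRoot_charpoly, mem_spectrum_iff_isRoot_charpoly, charpoly_transpose]

theorem aeval_mul_eq_mul_aeval {A : Matrix ι ι K} {B : Matrix κ κ K} {X : Matrix ι κ K}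
    (hX : A * X = X * B) (q : K[X]) : aeval A q * X = X * aeval B q := by
  induction q using Polynomial.induction_on' with
  | add p q hp hq => rw [map_add, map_add, Matrix.add_mul, Matrix.mul_add, hp, hq]
  | monomial k a =>
    have hpow : A ^ k * X = X * B ^ k := by
      induction k with
      | zero => simp
      | succ k ih =>
        rw [pow_succ', pow_succ', Matrix.mul_assoc, ih, ← Matrix.mul_assoc, hX, Matrix.mul_assoc]
    simp only [aeval_monomial, ← Algebra.smul_def, Matrix.smul_mul, Matrix.mul_smul, hpow]

/-- Cayley–Hamilton gives `X * χ_A(B) = χ_A(A) * X = 0`, and `χ_A(B)` is invertible because no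
eigenvalue of `B` is a root of `χ_A`. -/
theorem eq_zero_of_mul_eq_mul_of_disjoint_spectrum [IsAlgClosed K] {A : Matrix ι ι K}
    {B : Matrix κ κ K} {X : Matrix ι κ K} (hAB : Disjoint (spectrum K A) (spectrum K B))
    (hX : A * X = X * B) : X = 0 := by
  have hunit : IsUnit (aeval B A.charpoly) := by
    by_contra h
    rw [(IsAlgClosed.splits _).eq_prod_roots_of_monic A.charpoly_monic] at h
    obtain ⟨r, hrB, hrA⟩ := spectrum.exists_mem_of_not_isUnit_aeval_prod h
    exact hAB.ne_of_mem (mem_spectrum_iff_isRoot_charpoly.2 hrA) hrB rfl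
  obtain ⟨u, hu⟩ := hunit
  have hXu : X * (u : Matrix κ κ K) = 0 := by
    rw [hu, ← aeval_mul_eq_mul_aeval hX, aeval_self_charpoly, Matrix.zero_mul]
  calc X = X * (u : Matrix κ κ K) * (↑u⁻¹ : Matrix κ κ K) := by
        rw [Matrix.mul_assoc, Units.mul_inv, Matrix.mul_one]
    _ = 0 := by rw [hXu, Matrix.zero_mul]

end Sylvester

section PosDef

variable {ι : Type*} [Fintype ι]

theorem dotProduct_lyapunov_mulVec {M P : Matrix ι ι ℝ} (hP : P.IsSymm) (x : ι → ℝ) :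
    x ⬝ᵥ (Mᵀ * P + P * M) *ᵥ x = 2 * (M *ᵥ x ⬝ᵥ P *ᵥ x) := by
  rw [add_mulVec, dotProduct_add, ← mulVec_mulVec, ← mulVec_mulVec, dotProduct_mulVec,
    vecMul_transpose, dotProduct_mulVec x P, ← P.mulVec_transpose, hP.eq,
    dotProduct_comm (P *ᵥ x)]
  ring

theorem PosSemidef.posDef_of_lyapunov [DecidableEq ι] {M P : Matrix ι ι ℝ} (hP : P.PosSemidef)
    (h : Mᵀ * P + P * M = -1) : P.PosDef := by
  refine posDef_iff_dotProduct_mulVec.2 ⟨hP.isHermitian, fun x hx => ?_⟩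
  rw [star_trivial]
  refine (hP.dotProduct_mulVec_nonneg x).lt_of_ne' fun hx0 => hx ?_
  have hPx : P *ᵥ x = 0 := (hP.dotProduct_mulVec_zero_iff x).1 (by rwa [star_trivial])
  have := dotProduct_lyapunov_mulVec (M := M) (isHermitian_iff_isSymm.1 hP.isHermitian) x
  rw [h, hPx, dotProduct_zero, mul_zero, neg_mulVec, one_mulVec, dotProduct_neg, neg_eq_zero]
    at this
  exact dotProduct_self_eq_zero.1 this

variable {X : Type*} [TopologicalSpace X] {F : X → Matrix ι ι ℝ}

theorem isClosed_setOf_posSemidef (hF : Continuous F) : IsClosed {x | (F x).PosSemidef} := by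
  simp only [posSemidef_iff_dotProduct_mulVec, star_trivial, Set.ofPred_and, Set.ofPred_forall]
  exact (isClosed_eq hF.matrix_conjTranspose hF).inter <| isClosed_iInter fun v =>
    isClosed_le continuous_const (continuous_const.dotProduct (hF.matrix_mulVec continuous_const))

/-- Positivity on the unit sphere, which is compact, persists near `x₀`. -/
theorem isOpen_setOf_posDef (hF : Continuous F) (hherm : ∀ x, (F x).IsHermitian) :
    IsOpen {x | (F x).PosDef} := by
  have hq : Continuous fun p : X × (ι → ℝ) => p.2 ⬝ᵥ F p.1 *ᵥ p.2 := by fun_prop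
  refine isOpen_iff_mem_nhds.2 fun x₀ hx₀ => ?_
  have hsphere : ∀ᶠ x in 𝓝 x₀, ∀ v ∈ Metric.sphere (0 : ι → ℝ) 1, 0 < v ⬝ᵥ F x *ᵥ v :=
    (isCompact_sphere 0 1).eventually_forall_of_forall_eventually fun v hv =>
      (hq.tendsto (x₀, v)).eventually (eventually_gt_nhds (by
        simpa using hx₀.dotProduct_mulVec_pos (x := v) (by rintro rfl; simp at hv)))
  filter_upwards [hsphere] with x hx
  refine posDef_iff_dotProduct_mulVec.2 ⟨hherm x, fun v hv => ?_⟩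
  have hnorm : 0 < ‖v‖ := norm_pos_iff.2 hv
  have hu : ‖v‖⁻¹ • v ∈ Metric.sphere (0 : ι → ℝ) 1 := by
    rw [mem_sphere_zero_iff_norm, norm_smul, norm_inv, norm_norm, inv_mul_cancel₀ hnorm.ne']
  have hpos := hx _ hu
  rw [mulVec_smul, dotProduct_smul, smul_dotProduct, smul_eq_mul, smul_eq_mul] at hpos
  rw [star_trivial]
  have hinv : 0 ≤ ‖v‖⁻¹ := by positivity
  exact pos_of_mul_pos_right (pos_of_mul_pos_right hpos hinv) hinv

end PosDef

end Matrix

theorem Continuous.ringInverse {X R : Type*} [TopologicalSpace X] [NormedRing R]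
    [HasSummableGeomSeries R] {f : X → R} (hf : Continuous f) (h : ∀ x, IsUnit (f x)) :
    Continuous fun x => Ring.inverse (f x) :=
  continuous_iff_continuousAt.2 fun x =>
    ((h x).unit_spec ▸ NormedRing.inverse_continuousAt (h x).unit).comp hf.continuousAt

theorem Continuous.ringInverse_apply {X 𝕜 E : Type*} [TopologicalSpace X]
    [NontriviallyNormedField 𝕜] [NormedAddCommGroup E] [NormedSpace 𝕜 E] [CompleteSpace E]
    {L : X → E →L[𝕜] E} (hL : Continuous L) (h : ∀ x, IsUnit (L x)) (y : E) :
    Continuous fun x => Ring.inverse (L x) y :=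
  (hL.ringInverse h).clm_apply continuous_const

section Lyapunov

variable {ι : Type*} [Fintype ι] [DecidableEq ι]

noncomputable def lyapunovOperator : Matrix ι ι ℝ →ₗ[ℝ] Matrix ι ι ℝ →L[ℝ] Matrix ι ι ℝ where
  toFun M := LinearMap.toContinuousLinearMap (LinearMap.mulLeft ℝ Mᵀ + LinearMap.mulRight ℝ M)
  map_add' M N := by
    ext P : 1
    simp [add_mul, mul_add]
    abel
  map_smul' c M := by
    ext P : 1
    simp [smul_add]

@[simp]
theorem lyapunovOperator_apply (M P : Matrix ι ι ℝ) : lyapunovOperator M P = Mᵀ * P + P * M :=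
  rfl

theorem continuous_lyapunovOperator : Continuous (lyapunovOperator (ι := ι)) :=
  LinearMap.continuous_of_finiteDimensional _

-- Any norm on matrices will do: it only serves to make the operators a Banach algebra.
attribute [local instance] Matrix.normedAddCommGroup Matrix.normedSpace in
theorem Continuous.ringInverse_lyapunovOperator_apply {X : Type*} [TopologicalSpace X]
    {N : X → Matrix ι ι ℝ} (hN : Continuous N) (hunit : ∀ x, IsUnit (lyapunovOperator (N x)))
    (Q : Matrix ι ι ℝ) : Continuous fun x => Ring.inverse (lyapunovOperator (N x)) Q :=
  (continuous_lyapunovOperator.comp hN).ringInverse_apply hunit Q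

theorem isSymm_of_lyapunov {M P Q : Matrix ι ι ℝ} (hM : Function.Injective (lyapunovOperator M))
    (hP : Mᵀ * P + P * M = Q) (hQ : Q.IsSymm) : P.IsSymm := by
  refine hM ?_
  rw [lyapunovOperator_apply, lyapunovOperator_apply, hP, ← hQ.eq, ← hP, transpose_add,
    transpose_mul, transpose_mul, transpose_transpose, add_comm]

theorem exists_dotProduct_lyapunov_mulVec_neg {β : Type*} [Fintype β] (A : β → Matrix ι ι ℝ)
    {α : β → ℝ} (hα : ∀ i, 0 ≤ α i) {P : Matrix ι ι ℝ}
    (hP : (∑ i, α i • A i)ᵀ * P + P * ∑ i, α i • A i = -1) {x : ι → ℝ} (hx : x ≠ 0) :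
    ∃ i, x ⬝ᵥ ((A i)ᵀ * P + P * A i) *ᵥ x < 0 := by
  have hsum : ∑ i, α i * (x ⬝ᵥ ((A i)ᵀ * P + P * A i) *ᵥ x) = -(x ⬝ᵥ x) := by
    rw [← one_mulVec x, ← dotProduct_neg, ← neg_mulVec, ← hP, one_mulVec,
      ← lyapunovOperator_apply, map_sum]
    simp only [map_smul, FunLike.coe_sum, Finset.sum_apply,
      FunLike.coe_smul, Pi.smul_apply, lyapunovOperator_apply, sum_mulVec, smul_mulVec,
      dotProduct_sum, dotProduct_smul, smul_eq_mul]
  have hxx : 0 < x ⬝ᵥ x := by simpa using dotProduct_star_self_pos_iff.2 hx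
  obtain ⟨i, -, hi⟩ := Finset.exists_lt_of_sum_lt (s := Finset.univ) (g := fun _ => (0 : ℝ))
    (by rw [hsum, Finset.sum_const_zero]; linarith)
  exact ⟨i, neg_of_mul_neg_right hi (hα i)⟩

end Lyapunov

namespace IsHurwitz

variable {n : ℕ} {M : Matrix (Fin n) (Fin n) ℝ}

/-- Over `ℂ` the equation reads `Mᵀ P = P (-M)`, and `spectrum Mᵀ = spectrum M` lies in the open
left half-plane while `spectrum (-M)` lies in the right one. -/
theorem eq_zero_of_lyapunov_eq_zero (hM : IsHurwitz M) {P : Matrix (Fin n) (Fin n) ℝ}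
    (hP : Mᵀ * P + P * M = 0) : P = 0 := by
  let c : ℝ →+* ℂ := algebraMap ℝ ℂ
  have hdisj : Disjoint (spectrum ℂ (M.map c)ᵀ) (spectrum ℂ (-M.map c)) := by
    rw [spectrum_transpose, ← spectrum.neg_eq, Set.disjoint_left]
    intro r hr hr'
    have h1 := hM r hr
    have h2 := hM (-r) hr'
    rw [Complex.neg_re] at h2
    linarith
  have hcomm : (M.map c)ᵀ * P.map c = P.map c * -M.map c := by
    rw [mul_neg, eq_neg_iff_add_eq_zero, ← transpose_map, ← Matrix.map_mul, ← Matrix.map_mul,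
      ← Matrix.map_add _ (map_add c), hP, Matrix.map_zero _ (map_zero c)]
  exact map_injective c.injective (eq_zero_of_mul_eq_mul_of_disjoint_spectrum hdisj hcomm)

theorem injective_lyapunovOperator (hM : IsHurwitz M) :
    Function.Injective (lyapunovOperator M) :=
  (injective_iff_map_eq_zero _).2 fun _ hP => hM.eq_zero_of_lyapunov_eq_zero hP

theorem isUnit_lyapunovOperator (hM : IsHurwitz M) : IsUnit (lyapunovOperator M) :=
  have hbij : Function.Bijective (lyapunovOperator M : _ →ₗ[ℝ] _) :=
    ⟨hM.injective_lyapunovOperator, LinearMap.injective_iff_surjective.1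
      hM.injective_lyapunovOperator⟩
  ⟨(LinearEquiv.ofBijective _ hbij).toContinuousLinearEquiv.toUnit, rfl⟩

theorem smul_sub_smul_one (hM : IsHurwitz M) {a b : ℝ} (ha : 0 ≤ a) (hb : 0 ≤ b)
    (hab : 0 < a + b) : IsHurwitz (a • M - b • 1) := by
  intro μ hμ
  let Mc := M.map (algebraMap ℝ ℂ)
  have hmap : (a • M - b • 1).map (algebraMap ℝ ℂ) = aeval Mc (C (a : ℂ) * X - C (b : ℂ)) := by
    ext i j
    by_cases h : i = j <;> simp [Mc, h, Algebra.algebraMap_eq_smul_one, one_apply]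
  rw [hmap] at hμ
  have : Nontrivial (Matrix (Fin n) (Fin n) ℂ) := by
    by_contra h
    rw [not_nontrivial_iff_subsingleton] at h
    rwa [spectrum.of_subsingleton] at hμ
  rw [spectrum.map_polynomial_aeval_of_nonempty _ _
    (spectrum.nonempty_of_isAlgClosed_of_finiteDimensional ℂ Mc)] at hμ
  obtain ⟨ν, hν, rfl⟩ := hμ
  have := hM ν hν
  simp only [eval_sub, eval_mul, eval_C, eval_X, Complex.sub_re, Complex.re_ofReal_mul,
    Complex.ofReal_re]
  rcases ha.eq_or_lt with rfl | ha
  · linarith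
  · nlinarith

theorem exists_posDef_lyapunov (hM : IsHurwitz M) :
    ∃ P : Matrix (Fin n) (Fin n) ℝ, P.IsSymm ∧ P.PosDef ∧ Mᵀ * P + P * M = -1 := by
  let N : unitInterval → Matrix (Fin n) (Fin n) ℝ := fun t => (t : ℝ) • M - (1 - t : ℝ) • 1
  have hNH : ∀ t, IsHurwitz (N t) := fun t =>
    hM.smul_sub_smul_one t.2.1 (sub_nonneg.2 t.2.2) (by simp)
  have hN : ∀ t, IsUnit (lyapunovOperator (N t)) := fun t => (hNH t).isUnit_lyapunovOperator
  let P : unitInterval → Matrix (Fin n) (Fin n) ℝ :=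
    fun t => Ring.inverse (lyapunovOperator (N t)) (-1)
  have hsol : ∀ t, (N t)ᵀ * P t + P t * N t = -1 := fun t => by
    rw [← lyapunovOperator_apply, ← mul_apply_eq_comp, Ring.mul_inverse_cancel _ (hN t),
      one_apply_eq_self]
  have hsymm : ∀ t, (P t).IsSymm := fun t =>
    isSymm_of_lyapunov (hNH t).injective_lyapunovOperator (hsol t) (by simp [IsSymm])
  have hcont : Continuous P := (by fun_prop : Continuous N).ringInverse_lyapunovOperator_apply hN _
  have hPosDef : {t | (P t).PosDef} = {t | (P t).PosSemidef} :=
    Set.ext fun t => ⟨PosDef.posSemidef, fun h => h.posDef_of_lyapunov (hsol t)⟩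
  have hN₀ : N 0 = -1 := by simp [N]
  have hP₀ : P 0 = (2⁻¹ : ℝ) • 1 := (hNH 0).injective_lyapunovOperator <| (hsol 0).trans <| by
    rw [lyapunovOperator_apply, hN₀]
    simp only [transpose_neg, transpose_one, neg_mul, one_mul, mul_neg, mul_one, ← neg_add,
      ← add_smul]
    norm_num
  have hclopen : IsClopen {t | (P t).PosDef} :=
    ⟨hPosDef ▸ isClosed_setOf_posSemidef hcont, isOpen_setOf_posDef hcont hsymm⟩
  have hP₀pos : (P 0).PosDef :=
    hP₀ ▸ (PosSemidef.one.smul (by norm_num : (0 : ℝ) ≤ 2⁻¹)).posDef_of_lyapunov (hP₀ ▸ hsol 0)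
  have hP₁ : (P 1).PosDef := by
    change 1 ∈ {t | (P t).PosDef}
    rw [hclopen.eq_univ ⟨0, hP₀pos⟩]
    trivial
  exact ⟨P 1, hsymm 1, hP₁, by simpa [N] using hsol 1⟩

end IsHurwitz

theorem exists_common_lyapunov_regions_cover_general
    {n m : ℕ} (A : Fin m → Matrix (Fin n) (Fin n) ℝ)
    (α : Fin m → ℝ) (hα : ∀ i, 0 ≤ α i)
    (hHurwitz : IsHurwitz (∑ i, α i • A i)) :
    ∃ P : Matrix (Fin n) (Fin n) ℝ, P.IsSymm ∧ P.PosDef ∧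
      {x : Fin n → ℝ | x ≠ 0} =
        ⋃ i : Fin m, {x : Fin n → ℝ | x ⬝ᵥ ((A i)ᵀ * P + P * A i).mulVec x < 0} := by
  obtain ⟨P, hPsymm, hPpos, hPlyap⟩ := hHurwitz.exists_posDef_lyapunov
  refine ⟨P, hPsymm, hPpos, Set.Subset.antisymm (fun x hx => ?_) ?_⟩
  · exact Set.mem_iUnion.2 (exists_dotProduct_lyapunov_mulVec_neg A hα hPlyap hx)
  · simp only [Set.iUnion_subset_iff]
    rintro i x hx rfl
    simp at hx

/-- if a convex combination of the A_i is Hurwitz, there is a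
symmetric positive definite P such that the regions
Ω_i = {x : xᵀ(A_iᵀP + PA_i)x < 0} cover ℝⁿ \ {0}. -/
theorem exists_common_lyapunov_regions_cover
    {n m : ℕ} (A : Fin m → Matrix (Fin n) (Fin n) ℝ)
    (α : Fin m → ℝ) (hα : ∀ i, 0 ≤ α i) (hsum : ∑ i, α i = 1)
    (hHurwitz : IsHurwitz (∑ i, α i • A i)) :
    ∃ P : Matrix (Fin n) (Fin n) ℝ, P.IsSymm ∧ P.PosDef ∧
      {x : Fin n → ℝ | x ≠ 0} =
        ⋃ i : Fin m, {x : Fin n → ℝ | x ⬝ᵥ ((A i)ᵀ * P + P * A i).mulVec x < 0} :=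
  exists_common_lyapunov_regions_cover_general A α hα hHurwitz
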